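/- arXiv:2007.07641 — 2 statements merged into one kernel-verified Lean document; each statement's English description precedes it below -/
import Mathlib

section
/- As formal power series over ℤ, ∑_{j∈ℤ} (−1)^j X^{j(3j−2)} = ∏_{k≥1} (1 − X^{6k−5})(1 − X^{6k−1})(1 − X^{6k}), where the left-hand side is the series whose coefficient of X^n is ∑ over integers j with j(3j−2) = n of (−1)^j. -/
/-!
Put `q = x y`. Both `q`-Pascal rules for the Gaussian binomials `[n, k]_q` give, by induction on
`N`, the finite Jacobi triple product
`∏_{m < N} (1 + x q^m) (1 + y q^m) = ∑_{|j| ≤ N} [2N, N + j]_q x^{j(j-1)/2} y^{j(j+1)/2}`.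
For `x = -X^5`, `y = -X` we get `q = X^6`, and the `j`-th monomial is `(-1)^j X^{j(3j-2)}`.
Multiplying by `(q; q)_N` turns the left side into the first `N` factors of the product, while
`(q; q)_N [2N, N + j]_q ≡ 1 mod q^{N - |j| + 1}`; for `N = n + 1` this congruence is fine enough
that the coefficient of `X^n` only sees the monomials `(-1)^j X^{j(3j-2)}`.
-/

open PowerSeries Finset

/-- The infinite product `∏_{k ≥ 0} f k` of formal power series, in the situation where the
`k`-th factor is `1 + (multiple of X^(k+1))`: the coefficient of `X^n` in the product is then
the (stable) coefficient of `X^n` in any partial product containing at least the first `n + 1`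
factors. -/
noncomputable def iprod (f : ℕ → PowerSeries ℤ) : PowerSeries ℤ :=
  PowerSeries.mk fun n => PowerSeries.coeff n (∏ k ∈ Finset.range (n + 1), f k)

section QBinomial

variable {R : Type*} [CommRing R] (q : R)

-- The lower index ranges over `ℤ`, so that the Pascal rules need no boundary cases.
noncomputable def qBinom : ℕ → ℤ → R
  | 0, k => if k = 0 then 1 else 0
  | n + 1, k => qBinom n (k - 1) + q ^ k.toNat * qBinom n k

def qPoch (n : ℕ) : R := ∏ i ∈ range n, (1 - q ^ (i + 1))

theorem qBinom_succ (n : ℕ) (k : ℤ) :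
    qBinom q (n + 1) k = qBinom q n (k - 1) + q ^ k.toNat * qBinom q n k := rfl

theorem qBinom_eq_zero {n : ℕ} {k : ℤ} (hk : k < 0 ∨ n < k) : qBinom q n k = 0 := by
  induction n generalizing k with
  | zero => simp only [qBinom]; grind
  | succ n ih => rw [qBinom_succ, ih (by omega), ih (by omega), mul_zero, add_zero]

theorem qBinom_zero_right (n : ℕ) : qBinom q n 0 = 1 := by
  induction n with
  | zero => rfl
  | succ n ih => simp [qBinom_succ, ih, qBinom_eq_zero q (k := -1) (by omega)]

theorem qBinom_succ' (n : ℕ) (k : ℤ) :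
    qBinom q (n + 1) k = q ^ (n + 1 - k).toNat * qBinom q n (k - 1) + qBinom q n k := by
  induction n generalizing k with
  | zero =>
    simp only [qBinom]
    rcases lt_trichotomy k 0 with hk | rfl | hk
    · grind
    · simp
    · rcases eq_or_lt_of_le (show 1 ≤ k by omega) with rfl | hk'
      · simp
      · grind
  | succ n ih =>
    conv_lhs => rw [qBinom_succ, ih, ih]
    conv_rhs => rw [qBinom_succ q n (k - 1), qBinom_succ q n k]
    rw [show (n + 1 - (k - 1)).toNat = ((n + 1 : ℕ) + 1 - k).toNat by omega]
    by_cases hk : 1 ≤ k ∧ k ≤ n + 1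
    · have hexp : ((n + 1 : ℕ) + 1 - k).toNat + (k - 1).toNat = k.toNat + (n + 1 - k).toNat := by
        omega
      linear_combination (-qBinom q n (k - 1)) * congrArg (q ^ ·) hexp
    · rw [qBinom_eq_zero q (k := k - 1) (by omega)]
      ring

theorem qBinom_add_two (n : ℕ) (k : ℤ) :
    qBinom q (n + 2) k = q ^ k.toNat * qBinom q n k + (1 + q ^ (n + 1)) * qBinom q n (k - 1) +
      q ^ (n + 2 - k).toNat * qBinom q n (k - 2) := by
  rw [qBinom_succ', qBinom_succ q n (k - 1), qBinom_succ q n k, sub_sub, one_add_one_eq_two]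
  push_cast
  rw [add_assoc, one_add_one_eq_two]
  by_cases hk : 1 ≤ k ∧ k ≤ n + 1
  · have hexp : (n + 2 - k).toNat + (k - 1).toNat = n + 1 := by omega
    linear_combination qBinom q n (k - 1) * congrArg (q ^ ·) hexp
  · rw [qBinom_eq_zero q (k := k - 1) (by omega)]
    ring

theorem qBinom_symm (n : ℕ) (k : ℤ) : qBinom q n (n - k) = qBinom q n k := by
  induction n generalizing k with
  | zero => simp only [qBinom]; grind
  | succ n ih =>
    rw [qBinom_succ', qBinom_succ, show (n + 1 : ℕ) - k - 1 = n - k by push_cast; ring,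
      show (n + 1 : ℕ) - k = n - (k - 1) by push_cast; ring, ih, ih,
      show (n : ℤ) + 1 - (n - (k - 1)) = k by ring]
    ring

theorem qPoch_succ (n : ℕ) : qPoch q (n + 1) = qPoch q n * (1 - q ^ (n + 1)) :=
  prod_range_succ _ _

theorem qBinom_mul_qPoch {n k : ℕ} (hk : k ≤ n) :
    qBinom q n k * qPoch q k = ∏ i ∈ Ico (n - k) n, (1 - q ^ (i + 1)) := by
  induction n generalizing k with
  | zero => simp [Nat.le_zero.mp hk, qBinom_zero_right, qPoch]
  | succ n ih =>
    rcases k with _ | k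
    · simp [qBinom_zero_right, qPoch]
    set P := ∏ i ∈ Ico (n - k) n, (1 - q ^ (i + 1))
    have hlow : qBinom q n k * qPoch q k = P := ih (by omega)
    have hhigh : qBinom q n (k + 1 : ℕ) * qPoch q (k + 1) = P * (1 - q ^ (n - k)) := by
      rcases eq_or_lt_of_le hk with hkn | hkn
      · rw [qBinom_eq_zero q (by omega), show n - k = 0 by omega]
        ring
      · rw [ih (by omega), prod_eq_prod_Ico_succ_bot (by omega),
          show n - (k + 1) + 1 = n - k by omega]
        ring
    have hq : q ^ (k + 1) * q ^ (n - k) = q ^ (n + 1) := by rw [← pow_add]; congr 1; omega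
    rw [Nat.add_sub_add_right, prod_Ico_succ_top (by omega), Nat.cast_succ, qBinom_succ,
      add_sub_cancel_right, show ((k : ℤ) + 1).toNat = k + 1 by omega, ← Nat.cast_succ]
    linear_combination qBinom q n k * qPoch_succ q k + (1 - q ^ (k + 1)) * hlow +
      q ^ (k + 1) * hhigh - P * hq

theorem pow_dvd_prod_Ico_one_sub_pow_sub_one {a c : ℕ} (b : ℕ) (hc : c ≤ a + 1) :
    q ^ c ∣ ∏ i ∈ Ico a b, (1 - q ^ (i + 1)) - 1 := by
  rw [← Ideal.Quotient.eq_zero_iff_dvd, map_sub, map_one, map_prod, sub_eq_zero]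
  refine prod_eq_one fun i hi => ?_
  rw [map_sub, map_one,
    (Ideal.Quotient.eq_zero_iff_dvd _ _).mpr (pow_dvd_pow q (by grind)), sub_zero]

theorem pow_dvd_qPoch_mul_qBinom_sub_one {N : ℕ} {j : ℤ} (hj : |j| ≤ N) :
    q ^ (N - j.natAbs + 1) ∣ qPoch q N * qBinom q (2 * N) (N + j) - 1 := by
  wlog hj0 : j ≤ 0 generalizing j
  · have := this (j := -j) (by rwa [abs_neg]) (by omega)
    rwa [Int.natAbs_neg, ← qBinom_symm,
      show ((2 * N : ℕ) : ℤ) - (N + -j) = N + j by push_cast; ring] at this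
  have hjN := (abs_le.mp hj).1
  obtain ⟨k, hk⟩ : ∃ k : ℕ, (N : ℤ) + j = k := ⟨(N + j).toNat, by omega⟩
  have hkN : k ≤ N := by omega
  set A := ∏ i ∈ Ico (2 * N - k) (2 * N), (1 - q ^ (i + 1))
  set B := ∏ i ∈ Ico k N, (1 - q ^ (i + 1))
  have hA : q ^ (k + 1) ∣ A - 1 := pow_dvd_prod_Ico_one_sub_pow_sub_one q _ (by omega)
  have hB : q ^ (k + 1) ∣ B - 1 := pow_dvd_prod_Ico_one_sub_pow_sub_one q _ le_rfl
  rw [hk, show N - j.natAbs = k by omega, qPoch, ← prod_range_mul_prod_Ico _ hkN, ← qPoch,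
    mul_comm, ← mul_assoc, qBinom_mul_qPoch q (by omega)]
  convert dvd_add (dvd_mul_of_dvd_right hB A) hA using 1
  ring

end QBinomial

section TripleProduct

variable {R : Type*} [CommRing R] (x y : R)

def triangular (j : ℤ) : ℕ := (j * (j - 1) / 2).toNat

theorem two_mul_triangular (j : ℤ) : 2 * (triangular j : ℤ) = j * (j - 1) := by
  have h0 : 0 ≤ j * (j - 1) := by rcases le_or_gt j 0 with h | h <;> nlinarith
  rw [triangular, Int.toNat_of_nonneg (Int.ediv_nonneg h0 (by norm_num)),
    Int.mul_ediv_cancel' (Int.even_mul_pred_self j).two_dvd]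

theorem triangular_add_one (j : ℤ) : (triangular (j + 1) : ℤ) = triangular j + j := by
  have := two_mul_triangular (j + 1)
  have := two_mul_triangular j
  linarith

theorem triangular_add_triangular_neg (j : ℤ) :
    (triangular j : ℤ) + triangular (-j) = j ^ 2 := by
  have := two_mul_triangular j
  have := two_mul_triangular (-j)
  linarith

noncomputable def tripleTerm (N : ℕ) (j : ℤ) : R :=
  qBinom (x * y) (2 * N) (N + j) * x ^ triangular j * y ^ triangular (-j)

theorem tripleTerm_eq_zero {N : ℕ} {j : ℤ} (hj : j < -N ∨ N < j) :
    tripleTerm x y N j = 0 := by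
  rw [tripleTerm, qBinom_eq_zero _ (by push_cast; omega), zero_mul, zero_mul]

theorem mul_pow_mul_pow_triangular {N : ℕ} {j : ℤ} (hj : -(N + 1 : ℤ) ≤ j) :
    (x * y) ^ (N + 1 + j).toNat * (x ^ triangular j * y ^ triangular (-j)) =
      x ^ (N + 1) * y ^ N * (x ^ triangular (j + 1) * y ^ triangular (-(j + 1))) := by
  have hx := triangular_add_one j
  have hy := triangular_add_one (-(j + 1))
  rw [show -(j + 1) + 1 = -j by ring] at hy
  calc _ = x ^ ((N + 1 + j).toNat + triangular j) *
          y ^ ((N + 1 + j).toNat + triangular (-j)) := by ring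
    _ = x ^ (N + 1 + triangular (j + 1)) * y ^ (N + triangular (-(j + 1))) := by
        rw [show (N + 1 + j).toNat + triangular j = N + 1 + triangular (j + 1) by omega,
          show (N + 1 + j).toNat + triangular (-j) = N + triangular (-(j + 1)) by omega]
    _ = _ := by ring

theorem tripleTerm_succ {N : ℕ} {j : ℤ} (hj : -(N + 1 : ℤ) ≤ j ∧ j ≤ N + 1) :
    tripleTerm x y (N + 1) j = x ^ (N + 1) * y ^ N * tripleTerm x y N (j + 1) +
      (1 + (x * y) ^ (2 * N + 1)) * tripleTerm x y N j +
      x ^ N * y ^ (N + 1) * tripleTerm x y N (j - 1) := by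
  have hup := mul_pow_mul_pow_triangular x y hj.1
  have hdown := mul_pow_mul_pow_triangular y x (N := N) (j := -j) (by omega)
  rw [neg_neg, mul_comm y x, show -j + 1 = -(j - 1) by ring, neg_neg] at hdown
  simp only [tripleTerm]
  rw [show 2 * (N + 1) = 2 * N + 2 by ring, qBinom_add_two,
    show ((N + 1 : ℕ) : ℤ) + j = N + (j + 1) by push_cast; ring,
    show ((N : ℤ) + (j + 1)).toNat = (N + 1 + j).toNat by ring_nf,
    show (((2 * N : ℕ) : ℤ) + 2 - (N + (j + 1))).toNat = (N + 1 + -j).toNat by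
      push_cast; ring_nf,
    show (N : ℤ) + (j + 1) - 1 = N + j by ring,
    show (N : ℤ) + (j + 1) - 2 = N + (j - 1) by ring]
  linear_combination qBinom (x * y) (2 * N) (N + (j + 1)) * hup +
    qBinom (x * y) (2 * N) (N + (j - 1)) * hdown

theorem sum_Icc_tripleTerm_add (N : ℕ) {c : ℤ} (hc : |c| ≤ 1) :
    ∑ j ∈ Icc (-(N + 1 : ℤ)) (N + 1), tripleTerm x y N (j + c) =
      ∑ j ∈ Icc (-(N : ℤ)) N, tripleTerm x y N j := by
  have hshift := sum_map (Icc (-(N + 1 : ℤ)) (N + 1)) (addRightEmbedding c) (tripleTerm x y N)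
  rw [map_add_right_Icc] at hshift
  simp only [addRightEmbedding_apply] at hshift
  rw [← hshift]
  have := abs_le.mp hc
  refine (sum_subset (Icc_subset_Icc (by omega) (by omega)) fun j _ hj => ?_).symm
  exact tripleTerm_eq_zero x y (by rw [mem_Icc] at hj; omega)

theorem prod_one_add_mul_one_add_eq_sum_tripleTerm (N : ℕ) :
    ∏ m ∈ range N, (1 + x * (x * y) ^ m) * (1 + y * (x * y) ^ m) =
      ∑ j ∈ Icc (-(N : ℤ)) N, tripleTerm x y N j := by
  induction N with
  | zero => simp [tripleTerm, qBinom, triangular]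
  | succ N ih =>
    push_cast
    rw [prod_range_succ, ih, sum_congr rfl fun j hj => tripleTerm_succ x y (mem_Icc.mp hj)]
    have h0 := sum_Icc_tripleTerm_add x y N (c := 0) (by simp)
    simp only [add_zero] at h0
    simp only [sum_add_distrib, ← mul_sum, sub_eq_add_neg, h0,
      sum_Icc_tripleTerm_add x y N (c := 1) (by simp),
      sum_Icc_tripleTerm_add x y N (c := -1) (by simp)]
    ring

end TripleProduct

theorem coeff_mul_X_pow_of_X_pow_dvd_sub_one {R : Type*} [CommRing R] {f : R⟦X⟧} {m e n : ℕ}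
    (hf : X ^ m ∣ f - 1) (hn : n < m + e) : coeff n (f * X ^ e) = if n = e then 1 else 0 := by
  have hdvd : X ^ (m + e) ∣ (f - 1) * X ^ e := by
    rw [pow_add]
    exact mul_dvd_mul hf dvd_rfl
  have h0 := X_pow_dvd_iff.mp hdvd n hn
  rwa [sub_mul, one_mul, map_sub, sub_eq_zero, coeff_X_pow] at h0

theorem neg_one_pow_triangular_add_triangular_neg (j : ℤ) :
    (-1 : ℤ) ^ (triangular j + triangular (-j)) = if Even j then 1 else -1 := by
  have hpar : Even (triangular j + triangular (-j)) ↔ Even j := by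
    rw [← Int.even_coe_nat, Nat.cast_add, triangular_add_triangular_neg,
      Int.even_pow' two_ne_zero]
  split_ifs with h
  · exact (hpar.mpr h).neg_one_pow
  · exact (Nat.not_even_iff_odd.mp (hpar.not.mpr h)).neg_one_pow

theorem coeff_tripleTerm_mul_qPoch {n : ℕ} {j : ℤ} (hj : |j| ≤ n + 1) :
    coeff n (tripleTerm (-X ^ 5 : ℤ⟦X⟧) (-X) (n + 1) j * qPoch (X ^ 6) (n + 1)) =
      if j * (3 * j - 2) = n then (if Even j then 1 else -1) else 0 := by
  set e := 5 * triangular j + triangular (-j)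
  have he : (e : ℤ) = j * (3 * j - 2) := by
    have := two_mul_triangular j
    have := two_mul_triangular (-j)
    push_cast [e]
    linarith
  have hterm : tripleTerm (-X ^ 5 : ℤ⟦X⟧) (-X) (n + 1) j * qPoch (X ^ 6) (n + 1) =
      C (if Even j then 1 else -1) *
        (qPoch (X ^ 6) (n + 1) * qBinom (X ^ 6) (2 * (n + 1)) ((n + 1 : ℕ) + j) * X ^ e) := by
    have hxy : (-X ^ 5 : ℤ⟦X⟧) * (-X) = X ^ 6 := by ring
    rw [tripleTerm, hxy, neg_pow (X ^ 5), neg_pow X, ← neg_one_pow_triangular_add_triangular_neg]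
    simp only [e, pow_add, pow_mul, map_mul, map_pow, map_neg, map_one]
    ring
  have hdvd := pow_dvd_qPoch_mul_qBinom_sub_one (X ^ 6 : ℤ⟦X⟧) (N := n + 1) (j := j)
    (by exact_mod_cast hj)
  rw [← pow_mul] at hdvd
  rw [hterm, coeff_C_mul, coeff_mul_X_pow_of_X_pow_dvd_sub_one hdvd]
  · have hne : n = e ↔ j * (3 * j - 2) = n := by omega
    simp only [hne]
    split_ifs <;> simp
  · have habs : (j.natAbs : ℤ) = |j| := Int.natCast_natAbs j
    have : (n : ℤ) < 6 * (n + 2 - |j|) + j * (3 * j - 2) := by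
      rcases abs_cases j with ⟨h, _⟩ | ⟨h, _⟩ <;> nlinarith
    omega

/-- As formal power series over `ℤ`,
`∑_{j ∈ ℤ} (-1)^j X^{j(3j-2)} = ∏_{k ≥ 1} (1 - X^{6k-5})(1 - X^{6k-1})(1 - X^{6k})`,
where the left-hand side is the series whose coefficient of `X^n` is the sum of `(-1)^j`
over the (finitely many) integers `j` with `j(3j-2) = n`. -/
theorem stmt15 :
    (PowerSeries.mk fun n =>
        ∑' j : ℤ, if j * (3 * j - 2) = (n : ℤ) then (if Even j then (1 : ℤ) else -1) else 0) =
      iprod (fun k => (1 - (X : PowerSeries ℤ) ^ (6 * (k + 1) - 5)) *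
        (1 - (X : PowerSeries ℤ) ^ (6 * (k + 1) - 1)) *
        (1 - (X : PowerSeries ℤ) ^ (6 * (k + 1)))) := by
  ext n
  have hfactor (k : ℕ) :
      (1 - (X : ℤ⟦X⟧) ^ (6 * (k + 1) - 5)) * (1 - X ^ (6 * (k + 1) - 1)) *
          (1 - X ^ (6 * (k + 1))) =
        (1 + -X ^ 5 * (X ^ 6) ^ k) * (1 + -X * (X ^ 6) ^ k) * (1 - (X ^ 6) ^ (k + 1)) := by
    rw [show 6 * (k + 1) - 5 = 6 * k + 1 by omega, show 6 * (k + 1) - 1 = 6 * k + 5 by omega]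
    ring
  have hxy : (-X ^ 5 : ℤ⟦X⟧) * (-X) = X ^ 6 := by ring
  rw [iprod, coeff_mk, coeff_mk, prod_congr rfl fun k _ => hfactor k, prod_mul_distrib, ← hxy,
    prod_one_add_mul_one_add_eq_sum_tripleTerm, hxy, ← qPoch, sum_mul, map_sum,
    tsum_eq_sum (s := Icc (-(n + 1 : ℕ) : ℤ) (n + 1 : ℕ)) fun j hj => if_neg ?_]
  · push_cast
    exact (sum_congr rfl fun j hj => coeff_tripleTerm_mul_qPoch (abs_le.mpr (mem_Icc.mp hj))).symm
  · rw [mem_Icc, not_and_or, not_le, not_le] at hj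
    push_cast at hj
    rcases hj with hj | hj <;> nlinarith
end

section
/- Let m ≥ 1 and c be integers with 0 < c < m. As formal power series over ℤ, ∑_{j∈ℤ} (−1)^j X^{(m−c)·j(j+1)/2 + c·j(j−1)/2} = ∏_{k≥1} (1 − X^{mk−c})(1 − X^{mk−(m−c)})(1 − X^{mk}); note that (m−c)·j(j+1)/2 + c·j(j−1)/2 = (mj² + (m−2c)j)/2 is a nonnegative integer for every j ∈ ℤ. -/
/-!
Put `a = X^(m-c)`, `b = X^c` and `q = a b = X^m`. The finite form of the triple product,
`∏_{k<N} (1 - a q^k)(1 - b q^k) = ∑_{|j| ≤ N} (-1)^j a^(j(j+1)/2) b^(j(j-1)/2) [2N, N+j]_q`,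
holds in any commutative ring and follows by induction on `N` from the two `q`-Pascal rules.
Multiplying by `(q; q)_N` and using `[2N, N+j]_q (q; q)_N ≡ 1 mod q^(N-|j|+1)`, both sides of the
theorem agree modulo `X^(N+1)`, because the `j`-th exponent is at least `|j|` when `0 < c < m`.
-/

open PowerSeries Finset

lemma dvd_mul_sub_one {R : Type*} [CommRing R] {x y z : R} (hy : x ∣ y - 1) (hz : x ∣ z - 1) :
    x ∣ y * z - 1 := by
  have : y * z - 1 = y * (z - 1) + (y - 1) := by ring
  exact this ▸ dvd_add (hz.mul_left y) hy

lemma dvd_prod_one_sub_sub_one {ι R : Type*} [CommRing R] {x : R} {s : Finset ι} {f : ι → R}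
    (h : ∀ i ∈ s, x ∣ f i) : x ∣ ∏ i ∈ s, (1 - f i) - 1 :=
  prod_induction _ (fun y => x ∣ y - 1) (fun _ _ => dvd_mul_sub_one) (by simp)
    fun i hi => by simpa using (h i hi).neg_right

lemma sum_Icc_add_eq_of_support {M : Type*} [AddCommMonoid M] {f : ℤ → M} {a b a' b' d : ℤ}
    (hf : ∀ j ∉ Icc a b, f j = 0) (ha : a' + d ≤ a) (hb : b ≤ b' + d) :
    ∑ j ∈ Icc a' b', f (j + d) = ∑ j ∈ Icc a b, f j := by
  calc ∑ j ∈ Icc a' b', f (j + d) = ∑ j ∈ Icc (a' + d) (b' + d), f j := by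
        rw [← map_add_right_Icc, sum_map]; rfl
    _ = ∑ j ∈ Icc a b, f j := (sum_subset (Icc_subset_Icc ha hb) fun j _ hj => hf j hj).symm

section QBinomial

variable {R : Type*} [CommRing R] (q : R)

/-- The Gaussian binomial coefficient `[n, k]_q`, with `k : ℤ` and `[n, k]_q = 0` for
`k ∉ [0, n]`. The `toNat` only truncates when `k > n + 1`, where `[n, k - 1]_q = 0`. -/
def qBinomial : ℕ → ℤ → R
  | 0, k => if k = 0 then 1 else 0
  | n + 1, k => qBinomial n k + q ^ (n + 1 - k).toNat * qBinomial n (k - 1)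

/-- The `q`-Pochhammer symbol `(q; q)_t`. -/
def qPochhammer (t : ℕ) : R := ∏ i ∈ range t, (1 - q ^ (i + 1))

lemma qBinomial_zero (k : ℤ) : qBinomial q 0 k = if k = 0 then 1 else 0 := rfl

lemma qBinomial_succ (n : ℕ) (k : ℤ) :
    qBinomial q (n + 1) k = qBinomial q n k + q ^ (n + 1 - k).toNat * qBinomial q n (k - 1) :=
  rfl

lemma qBinomial_eq_zero_of_notMem (n : ℕ) {k : ℤ} (hk : k ∉ Icc 0 (n : ℤ)) :
    qBinomial q n k = 0 := by
  induction n generalizing k with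
  | zero => simp_all [qBinomial_zero]
  | succ n ih =>
    simp only [mem_Icc, not_and_or, not_le] at hk
    rw [qBinomial_succ, ih (by simp only [mem_Icc]; omega), ih (by simp only [mem_Icc]; omega),
      mul_zero, add_zero]

lemma pow_mul_qBinomial_congr (n : ℕ) {k : ℤ} {d e : ℕ} (h : k ∈ Icc 0 (n : ℤ) → d = e) :
    q ^ d * qBinomial q n k = q ^ e * qBinomial q n k := by
  by_cases hk : k ∈ Icc 0 (n : ℤ)
  · rw [h hk]
  · simp [qBinomial_eq_zero_of_notMem q n hk]

lemma qBinomial_succ' (n : ℕ) (k : ℤ) :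
    qBinomial q (n + 1) k = qBinomial q n (k - 1) + q ^ k.toNat * qBinomial q n k := by
  induction n generalizing k with
  | zero =>
    simp only [qBinomial_succ, qBinomial_zero]
    obtain rfl | rfl | hk : k = 0 ∨ k = 1 ∨ (k ≠ 0 ∧ k - 1 ≠ 0) := by omega
    all_goals simp_all
  | succ n ih =>
    -- both sides expand to the same four terms; the two products of powers of `q` in front of
    -- `[n, k - 1]_q` agree wherever it is nonzero
    have hexp := pow_mul_qBinomial_congr q n (k := k - 1)
      (d := (↑(n + 1) + 1 - k).toNat + (k - 1).toNat) (e := k.toNat + (↑n + 1 - k).toNat)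
      (fun hk => by simp only [mem_Icc] at hk; omega)
    have h₁ := qBinomial_succ q (n + 1) k
    have h₂ := qBinomial_succ q n k
    have h₃ := qBinomial_succ q n (k - 1)
    rw [show (n : ℤ) + 1 - (k - 1) = ↑(n + 1) + 1 - k by push_cast; ring] at h₃
    simp only [pow_add] at hexp
    linear_combination h₁ + ih k + q ^ (↑(n + 1) + 1 - k).toNat * ih (k - 1) - h₃
      - q ^ k.toNat * h₂ + hexp

lemma qBinomial_symm (n : ℕ) (k : ℤ) : qBinomial q n (n - k) = qBinomial q n k := by
  induction n generalizing k with
  | zero => simp [qBinomial_zero]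
  | succ n ih =>
    rw [qBinomial_succ, qBinomial_succ',
      show ((n + 1 : ℕ) : ℤ) - k = n - (k - 1) by push_cast; ring, ih,
      show (n : ℤ) + 1 - (n - (k - 1)) = k by ring, show (n : ℤ) - (k - 1) - 1 = n - k by ring,
      ih, add_comm]

lemma qPochhammer_succ (t : ℕ) : qPochhammer q (t + 1) = qPochhammer q t * (1 - q ^ (t + 1)) :=
  prod_range_succ _ t

lemma qBinomial_mul_qPochhammer {n k : ℕ} (hk : k ≤ n) :
    qBinomial q n k * qPochhammer q k = ∏ i ∈ Ico (n - k) n, (1 - q ^ (i + 1)) := by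
  induction n generalizing k with
  | zero => simp [Nat.le_zero.mp hk, qBinomial_zero, qPochhammer]
  | succ n ih =>
    rcases k with _ | k
    · simpa [qBinomial_succ, qBinomial_eq_zero_of_notMem, qPochhammer] using
        ih (k := 0) (Nat.zero_le n)
    have hlow : qBinomial q n k * qPochhammer q (k + 1) =
        (1 - q ^ (k + 1)) * ∏ i ∈ Ico (n - k) n, (1 - q ^ (i + 1)) := by
      rw [qPochhammer_succ, ← ih (by omega)]; ring
    have hhigh : qBinomial q n (k + 1) * qPochhammer q (k + 1) =
        (1 - q ^ (n - k)) * ∏ i ∈ Ico (n - k) n, (1 - q ^ (i + 1)) := by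
      rcases Nat.lt_or_ge k n with hkn | hkn
      · rw [← Nat.cast_add_one, ih hkn, show n - (k + 1) = n - k - 1 by omega,
          prod_eq_prod_Ico_succ_bot (by omega), show n - k - 1 + 1 = n - k by omega]
      · rw [qBinomial_eq_zero_of_notMem q n (by simp only [mem_Icc]; omega),
          show n - k = 0 by omega]
        simp
    have hpow : q ^ (n - k) * q ^ (k + 1) = q ^ (n + 1) := by rw [← pow_add]; congr 1; omega
    rw [qBinomial_succ, Nat.cast_add_one, add_sub_cancel_right,
      show ((n : ℤ) + 1 - (k + 1)).toNat = n - k by omega, add_mul, mul_assoc, hlow, hhigh,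
      show n + 1 - (k + 1) = n - k by omega, prod_Ico_succ_top (by omega)]
    linear_combination (-∏ i ∈ Ico (n - k) n, (1 - q ^ (i + 1))) * hpow

lemma pow_dvd_qBinomial_mul_qPochhammer_sub_one {N : ℕ} {j : ℤ} (hj : j.natAbs ≤ N) :
    q ^ (N - j.natAbs + 1) ∣ qBinomial q (2 * N) (N + j) * qPochhammer q N - 1 := by
  set k := N - j.natAbs
  have hsymm : qBinomial q (2 * N) (N + j) = qBinomial q (2 * N) k := by
    rcases le_or_gt j 0 with h | h
    · congr 1; omega
    · rw [← qBinomial_symm]; congr 1; push_cast; omega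
  -- `[2N, k]_q (q; q)_k` and `(q; q)_N / (q; q)_k` are products of factors `1 - q^i` with `i > k`
  have hsplit : qPochhammer q N = qPochhammer q k * ∏ i ∈ Ico k N, (1 - q ^ (i + 1)) :=
    (prod_range_mul_prod_Ico _ (by omega)).symm
  have hbinom : q ^ (k + 1) ∣ qBinomial q (2 * N) k * qPochhammer q k - 1 := by
    rw [qBinomial_mul_qPochhammer q (by omega)]
    exact dvd_prod_one_sub_sub_one fun i hi => pow_dvd_pow q (by simp only [mem_Ico] at hi; omega)
  have htail : q ^ (k + 1) ∣ ∏ i ∈ Ico k N, (1 - q ^ (i + 1)) - 1 :=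
    dvd_prod_one_sub_sub_one fun i hi => pow_dvd_pow q (by simp only [mem_Ico] at hi; omega)
  rw [hsymm, hsplit, ← mul_assoc]
  exact dvd_mul_sub_one hbinom htail

lemma qBinomial_two_mul_succ (N : ℕ) (j : ℤ) :
    qBinomial q (2 * (N + 1)) ((N + 1 : ℕ) + j) =
      (1 + q ^ (2 * N + 1)) * qBinomial q (2 * N) (N + j)
        + q ^ (N + 1 + j).toNat * qBinomial q (2 * N) (N + (j + 1))
        + q ^ (N + 1 - j).toNat * qBinomial q (2 * N) (N + (j - 1)) := by
  have hA := qBinomial_succ q (2 * N + 1) (N + 1 + j)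
  have hB : qBinomial q (2 * N + 1) (N + 1 + j) = qBinomial q (2 * N) (N + j)
      + q ^ (N + 1 + j).toNat * qBinomial q (2 * N) (N + (j + 1)) := by
    rw [qBinomial_succ', show (N : ℤ) + 1 + j - 1 = N + j by ring, add_assoc (N : ℤ), add_comm 1 j]
  have hC := qBinomial_succ' q (2 * N) (N + j)
  have hexp := pow_mul_qBinomial_congr q (2 * N) (k := N + j)
    (d := (N + 1 - j).toNat + (N + j).toNat) (e := 2 * N + 1)
    (fun h => by simp only [mem_Icc] at h; omega)
  rw [show ((2 * N + 1 : ℕ) : ℤ) + 1 - (N + 1 + j) = N + 1 - j by push_cast; ring,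
    show (N : ℤ) + 1 + j - 1 = N + j by ring] at hA
  rw [show (N : ℤ) + j - 1 = N + (j - 1) by ring] at hC
  rw [show 2 * (N + 1) = 2 * N + 1 + 1 by ring, Nat.cast_add_one]
  rw [pow_add] at hexp
  linear_combination hA + hB + q ^ (N + 1 - j).toNat * hC + hexp

end QBinomial

section FiniteTripleProduct

def tri (j : ℤ) : ℕ := (j * (j + 1) / 2).toNat

lemma natCast_tri (j : ℤ) : (tri j : ℤ) = j * (j + 1) / 2 := by
  have hnonneg : 0 ≤ j * (j + 1) := by rcases le_or_gt 0 j with h | h <;> nlinarith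
  exact Int.toNat_of_nonneg (Int.ediv_nonneg hnonneg zero_le_two)

lemma two_mul_tri (j : ℤ) : 2 * (tri j : ℤ) = j * (j + 1) := by
  rw [natCast_tri, Int.mul_ediv_cancel' (Int.even_mul_succ_self j).two_dvd]

lemma tri_add_one (j : ℤ) : (tri (j + 1) : ℤ) = tri j + j + 1 := by
  linarith [two_mul_tri j, two_mul_tri (j + 1)]

lemma tri_add_tri_neg (j : ℤ) : tri j + tri (-j) = j.natAbs ^ 2 := by
  have h := two_mul_tri (-j)
  zify
  rw [sq_abs]
  linarith [two_mul_tri j]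

variable {R : Type*} [CommRing R] (a b : R)

/-- `(-1)^j a^(j(j+1)/2) b^(j(j-1)/2)`, as `tri (-j) = j (j - 1) / 2`. -/
def jacobiWeight (j : ℤ) : R := j.negOnePow • (a ^ tri j * b ^ tri (-j))

lemma jacobiWeight_swap (j : ℤ) : jacobiWeight b a (-j) = jacobiWeight a b j := by
  rw [jacobiWeight, jacobiWeight, Int.negOnePow_neg, neg_neg, mul_comm]

lemma jacobiWeight_mul_pow_of_eq_add {N k : ℕ} {j : ℤ} (hk : (k : ℤ) = N + 1 + j) :
    jacobiWeight a b j * (a * b) ^ k = -(b * (a * b) ^ N) * jacobiWeight a b (j + 1) := by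
  have ha : tri j + k = tri (j + 1) + N := by have := tri_add_one j; omega
  have hb : tri (-j) + k = tri (-(j + 1)) + (N + 1) := by
    have := tri_add_one (-(j + 1)); rw [show -(j + 1) + 1 = -j by ring] at this; omega
  rw [jacobiWeight, jacobiWeight, Int.negOnePow_succ, smul_mul_assoc, Units.neg_smul, neg_mul_neg,
    mul_smul_comm]
  congr 1
  calc a ^ tri j * b ^ tri (-j) * (a * b) ^ k = a ^ (tri j + k) * b ^ (tri (-j) + k) := by ring
    _ = a ^ (tri (j + 1) + N) * b ^ (tri (-(j + 1)) + (N + 1)) := by rw [ha, hb]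
    _ = _ := by ring

lemma jacobiWeight_mul_pow_of_eq_sub {N k : ℕ} {j : ℤ} (hk : (k : ℤ) = N + 1 - j) :
    jacobiWeight a b j * (a * b) ^ k = -(a * (a * b) ^ N) * jacobiWeight a b (j - 1) := by
  calc jacobiWeight a b j * (a * b) ^ k = jacobiWeight b a (-j) * (b * a) ^ k := by
        rw [jacobiWeight_swap, mul_comm b a]
    _ = -(a * (b * a) ^ N) * jacobiWeight b a (-j + 1) :=
        jacobiWeight_mul_pow_of_eq_add b a (by rw [hk]; ring)
    _ = -(a * (a * b) ^ N) * jacobiWeight a b (j - 1) := by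
        rw [show -j + 1 = -(j - 1) by ring, jacobiWeight_swap, mul_comm b a]

def jacobiTerm (N : ℕ) (j : ℤ) : R := jacobiWeight a b j * qBinomial (a * b) (2 * N) (N + j)

lemma jacobiTerm_eq_zero_of_notMem (N : ℕ) {j : ℤ} (hj : j ∉ Icc (-(N : ℤ)) N) :
    jacobiTerm a b N j = 0 := by
  rw [jacobiTerm, qBinomial_eq_zero_of_notMem _ _ (by simp only [mem_Icc] at hj ⊢; omega),
    mul_zero]

lemma jacobiTerm_succ (N : ℕ) (j : ℤ) :
    jacobiTerm a b (N + 1) j =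
      (1 + (a * b) ^ (2 * N + 1)) * jacobiTerm a b N j
        - b * (a * b) ^ N * jacobiTerm a b N (j + 1)
        - a * (a * b) ^ N * jacobiTerm a b N (j - 1) := by
  have hup : jacobiWeight a b j * (a * b) ^ (N + 1 + j).toNat *
      qBinomial (a * b) (2 * N) (N + (j + 1)) = -(b * (a * b) ^ N) * jacobiTerm a b N (j + 1) := by
    by_cases h : (N : ℤ) + (j + 1) ∈ Icc 0 ((2 * N : ℕ) : ℤ)
    · simp only [mem_Icc] at h
      rw [jacobiWeight_mul_pow_of_eq_add a b (N := N) (by omega), jacobiTerm, mul_assoc]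
    · simp [jacobiTerm, qBinomial_eq_zero_of_notMem _ _ h]
  have hdown : jacobiWeight a b j * (a * b) ^ (N + 1 - j).toNat *
      qBinomial (a * b) (2 * N) (N + (j - 1)) = -(a * (a * b) ^ N) * jacobiTerm a b N (j - 1) := by
    by_cases h : (N : ℤ) + (j - 1) ∈ Icc 0 ((2 * N : ℕ) : ℤ)
    · simp only [mem_Icc] at h
      rw [jacobiWeight_mul_pow_of_eq_sub a b (N := N) (by omega), jacobiTerm, mul_assoc]
    · simp [jacobiTerm, qBinomial_eq_zero_of_notMem _ _ h]
  rw [jacobiTerm, qBinomial_two_mul_succ, jacobiTerm]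
  linear_combination hup + hdown

theorem finite_jacobi_triple_product (N : ℕ) :
    ∏ k ∈ range N, (1 - a * (a * b) ^ k) * (1 - b * (a * b) ^ k) =
      ∑ j ∈ Icc (-(N : ℤ)) N, jacobiTerm a b N j := by
  induction N with
  | zero => simp [jacobiTerm, jacobiWeight, tri, qBinomial_zero]
  | succ N ih =>
    have hshift (d : ℤ) (hd : -1 ≤ d ∧ d ≤ 1) :
        ∑ j ∈ Icc (-((N + 1 : ℕ) : ℤ)) (N + 1 : ℕ), jacobiTerm a b N (j + d) =
          ∑ j ∈ Icc (-(N : ℤ)) N, jacobiTerm a b N j :=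
      sum_Icc_add_eq_of_support (fun _ => jacobiTerm_eq_zero_of_notMem a b N) (by omega)
        (by omega)
    have h₀ := hshift 0 (by norm_num)
    have h₁ := hshift 1 (by norm_num)
    have h₂ := hshift (-1) (by norm_num)
    simp only [add_zero, ← sub_eq_add_neg] at h₀ h₂
    rw [prod_range_succ, ih, sum_congr rfl fun j _ => jacobiTerm_succ a b N j,
      sum_sub_distrib, sum_sub_distrib, ← mul_sum, ← mul_sum, ← mul_sum, h₀, h₁, h₂]
    ring

end FiniteTripleProduct

section PowerSeries

def jacobiExponent (m c : ℕ) (j : ℤ) : ℕ := (m - c) * tri j + c * tri (-j)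

lemma natCast_jacobiExponent {m c : ℕ} (hcm : c ≤ m) (j : ℤ) :
    (jacobiExponent m c j : ℤ) = ((m : ℤ) - c) * (j * (j + 1) / 2) + c * (j * (j - 1) / 2) := by
  rw [jacobiExponent, Nat.cast_add, Nat.cast_mul, Nat.cast_mul, Nat.cast_sub hcm, natCast_tri,
    natCast_tri, show -j * (-j + 1) = j * (j - 1) by ring]

lemma natAbs_le_jacobiExponent {m c : ℕ} (hc : 0 < c) (hcm : c < m) (j : ℤ) :
    j.natAbs ≤ jacobiExponent m c j := by
  have hsq := tri_add_tri_neg j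
  have h₁ : tri j ≤ (m - c) * tri j := Nat.le_mul_of_pos_left _ (by omega)
  have h₂ : tri (-j) ≤ c * tri (-j) := Nat.le_mul_of_pos_left _ hc
  have h₃ : j.natAbs ≤ j.natAbs ^ 2 := Nat.le_self_pow two_ne_zero _
  rw [jacobiExponent]
  omega

variable {R : Type*} [CommRing R]

lemma jacobiWeight_X_pow (m c : ℕ) (j : ℤ) :
    jacobiWeight (X ^ (m - c) : R⟦X⟧) (X ^ c) j = j.negOnePow • X ^ jacobiExponent m c j := by
  rw [jacobiWeight, jacobiExponent, pow_add, pow_mul, pow_mul]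

theorem X_pow_dvd_prod_sub_sum_jacobi {m c : ℕ} (hc : 0 < c) (hcm : c < m) (N : ℕ) :
    (X : R⟦X⟧) ^ (N + 1) ∣
      ∏ k ∈ range N, (1 - X ^ (m * (k + 1) - c)) * (1 - X ^ (m * (k + 1) - (m - c))) *
        (1 - X ^ (m * (k + 1))) -
      ∑ j ∈ Icc (-(N : ℤ)) N, j.negOnePow • X ^ jacobiExponent m c j := by
  have hq : (X : R⟦X⟧) ^ (m - c) * X ^ c = X ^ m := by rw [← pow_add, Nat.sub_add_cancel hcm.le]
  have hprod : ∏ k ∈ range N, (1 - (X : R⟦X⟧) ^ (m * (k + 1) - c)) *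
        (1 - X ^ (m * (k + 1) - (m - c))) * (1 - X ^ (m * (k + 1))) =
      (∏ k ∈ range N, (1 - X ^ (m - c) * (X ^ (m - c) * X ^ c) ^ k) *
        (1 - X ^ c * (X ^ (m - c) * X ^ c) ^ k)) * qPochhammer (X ^ (m - c) * X ^ c) N := by
    rw [qPochhammer, ← prod_mul_distrib]
    refine prod_congr rfl fun k _ => ?_
    have hmk : m ≤ m * (k + 1) := Nat.le_mul_of_pos_right m k.succ_pos
    rw [hq, ← pow_mul, ← pow_add, ← pow_add, ← pow_mul,
      show m - c + m * k = m * (k + 1) - c by zify [hcm.le, hcm.le.trans hmk]; ring,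
      show c + m * k = m * (k + 1) - (m - c) by
        zify [hcm.le, (Nat.sub_le m c).trans hmk]; ring]
  rw [hprod, finite_jacobi_triple_product, sum_mul, ← sum_sub_distrib]
  simp only [jacobiTerm, hq]
  refine dvd_sum fun j hj => ?_
  have hj : j.natAbs ≤ N := by simp only [mem_Icc] at hj; omega
  have hterm := pow_dvd_qBinomial_mul_qPochhammer_sub_one (X ^ m : R⟦X⟧) hj
  rw [← pow_mul] at hterm
  have hdeg : N + 1 ≤ jacobiExponent m c j + m * (N - j.natAbs + 1) := by
    have := natAbs_le_jacobiExponent hc hcm j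
    have : N - j.natAbs + 1 ≤ m * (N - j.natAbs + 1) := Nat.le_mul_of_pos_left _ (by omega)
    omega
  rw [jacobiWeight_X_pow, Units.smul_def, zsmul_eq_mul,
    show ∀ u x y z : R⟦X⟧, u * x * y * z - u * x = u * (x * (y * z - 1)) by intros; ring]
  refine ((pow_dvd_pow X hdeg).trans ?_).mul_left _
  rw [pow_add]
  exact mul_dvd_mul_left _ hterm

lemma coeff_sum_negOnePow_smul_X_pow {m c : ℕ} (hc : 0 < c) (hcm : c < m) {n N : ℕ}
    (hn : n ≤ N) :
    coeff n (∑ j ∈ Icc (-(N : ℤ)) N, j.negOnePow • (X : ℤ⟦X⟧) ^ jacobiExponent m c j) =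
      ∑' j : ℤ, if ((m : ℤ) - c) * (j * (j + 1) / 2) + (c : ℤ) * (j * (j - 1) / 2) = (n : ℤ)
        then (if Even j then (1 : ℤ) else -1) else 0 := by
  have hsign (j : ℤ) : (j.negOnePow : ℤ) = if Even j then 1 else -1 := by
    split_ifs with h
    · simp [Int.negOnePow_even _ h]
    · simp [Int.negOnePow_odd _ (Int.not_even_iff_odd.mp h)]
  simp_rw [← natCast_jacobiExponent hcm.le, Nat.cast_inj]
  rw [tsum_eq_sum (s := Icc (-(N : ℤ)) N) fun j hj => if_neg fun he => hj ?_]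
  · rw [map_sum]
    refine sum_congr rfl fun j _ => ?_
    rw [Units.smul_def, map_zsmul, coeff_X_pow, hsign, smul_eq_mul, mul_ite, mul_one, mul_zero]
    simp only [eq_comm]
  · have := natAbs_le_jacobiExponent hc hcm j
    simp only [mem_Icc]
    omega

end PowerSeries

/-- For integers `m ≥ 1` and `0 < c < m`, as formal power series over `ℤ`,
`∑_{j ∈ ℤ} (-1)^j X^{(m-c)·j(j+1)/2 + c·j(j-1)/2}
  = ∏_{k ≥ 1} (1 - X^{mk-c})(1 - X^{mk-(m-c)})(1 - X^{mk})`,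
where the left-hand side is the series whose coefficient of `X^n` is the sum of `(-1)^j`
over the (finitely many) integers `j` with `(m-c)·j(j+1)/2 + c·j(j-1)/2 = n`. -/
theorem stmt16 (m c : ℕ) (hc : 0 < c) (hcm : c < m) :
    (PowerSeries.mk fun n =>
        ∑' j : ℤ, if ((m : ℤ) - c) * (j * (j + 1) / 2) + (c : ℤ) * (j * (j - 1) / 2) = (n : ℤ)
          then (if Even j then (1 : ℤ) else -1) else 0) =
      iprod (fun k => (1 - (X : PowerSeries ℤ) ^ (m * (k + 1) - c)) *
        (1 - (X : PowerSeries ℤ) ^ (m * (k + 1) - (m - c))) *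
        (1 - (X : PowerSeries ℤ) ^ (m * (k + 1)))) := by
  ext n
  rw [coeff_mk, iprod, coeff_mk, ← coeff_sum_negOnePow_smul_X_pow hc hcm (N := n + 1) (by omega),
    eq_comm, ← sub_eq_zero, ← map_sub]
  exact X_pow_dvd_iff.mp (X_pow_dvd_prod_sub_sum_jacobi (R := ℤ) hc hcm (n + 1)) n (by omega)
end
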